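/- arXiv:1610.09110 — 5 statements merged into one kernel-verified Lean document; each statement's English description precedes it below -/
import Mathlib

section
/- Let P ≪ Q be probability measures with β₁ = (ess sup_Q dP/dQ)⁻¹ and β₂ = ess inf_Q dP/dQ. Then χ²(P‖Q) ≤ max{1/β₁ − 1, 1 − β₂} · |P−Q|. -/
open MeasureTheory Set

theorem chiSq_le_max_mul_TV {α : Type*} [MeasurableSpace α] (P Q : Measure α)
    [IsProbabilityMeasure P] [IsProbabilityMeasure Q] (hPQ : P ≪ Q)
    (hβ₁pos : essSup (P.rnDeriv Q) Q ≠ ⊤) :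
    ∫ x, ((P.rnDeriv Q x).toReal - 1) ^ 2 ∂Q
      ≤ max ((essSup (P.rnDeriv Q) Q).toReal - 1) (1 - (essInf (P.rnDeriv Q) Q).toReal)
        * ∫ x, |(P.rnDeriv Q x).toReal - 1| ∂Q := by
  set f := P.rnDeriv Q with hf
  set M := (essSup f Q).toReal
  set m := (essInf f Q).toReal
  set C := max (M - 1) (1 - m) with hC
  have hmeas : Measurable fun x => (f x).toReal :=
    (Measure.measurable_rnDeriv P Q).ennreal_toReal
  have h_le : ∀ᵐ x ∂Q, f x ≤ essSup f Q := ae_le_essSup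
  have h_ge : ∀ᵐ x ∂Q, essInf f Q ≤ f x := ae_essInf_le
  -- pointwise bound |f x - 1| ≤ C a.e.
  have h_bd : ∀ᵐ x ∂Q, |(f x).toReal - 1| ≤ C := by
    filter_upwards [h_le, h_ge] with x hx1 hx2
    have hxne : f x ≠ ⊤ := fun h => hβ₁pos (top_le_iff.mp (h ▸ hx1))
    have hM : (f x).toReal ≤ M := ENNReal.toReal_le_toReal hxne hβ₁pos |>.mpr hx1
    have hm : m ≤ (f x).toReal := ENNReal.toReal_le_toReal (ne_top_of_le_ne_top hβ₁pos (hx2.trans hx1)) hxne |>.mpr hx2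
    rcases le_or_gt 1 ((f x).toReal) with h | h
    · rw [abs_of_nonneg (by linarith)]
      exact le_max_of_le_left (by linarith)
    · rw [abs_of_nonpos (by linarith)]
      exact le_max_of_le_right (by linarith)
  have h_abs_int : Integrable (fun x => |(f x).toReal - 1|) Q := by
    refine Integrable.mono' (integrable_const (M + 1)) ?_ ?_
    · exact ((hmeas.sub measurable_const).abs).aestronglyMeasurable
    · filter_upwards [h_le] with x hx1
      have hxne : f x ≠ ⊤ := fun h => hβ₁pos (top_le_iff.mp (h ▸ hx1))
      have hM : (f x).toReal ≤ M := ENNReal.toReal_le_toReal hxne hβ₁pos |>.mpr hx1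
      have h0 : 0 ≤ (f x).toReal := ENNReal.toReal_nonneg
      rw [Real.norm_eq_abs, abs_abs]
      rw [abs_le]; constructor <;> [nlinarith; nlinarith]
  have h_int : Integrable (fun x => C * |(f x).toReal - 1|) Q := h_abs_int.const_mul C
  have h_pt : ∀ᵐ x ∂Q, ((f x).toReal - 1) ^ 2 ≤ C * |(f x).toReal - 1| := by
    filter_upwards [h_bd] with x hx
    calc ((f x).toReal - 1) ^ 2 = |(f x).toReal - 1| * |(f x).toReal - 1| := by
          rw [← sq_abs, sq]
      _ ≤ C * |(f x).toReal - 1| := mul_le_mul_of_nonneg_right hx (abs_nonneg _)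
  calc ∫ x, ((f x).toReal - 1) ^ 2 ∂Q ≤ ∫ x, C * |(f x).toReal - 1| ∂Q := by
        refine integral_mono_of_nonneg ?_ h_int h_pt
        filter_upwards with x using sq_nonneg _
    _ = C * ∫ x, |(f x).toReal - 1| ∂Q := integral_const_mul _ _
end

section
/- Let P and Q be mutually absolutely continuous probability measures with P ≠ Q, β₁ = (ess sup dP/dQ)⁻¹ ∈ (0,1) and β₂ = ess inf dP/dQ ∈ (0,1). With κ(t) = (t·ln t + 1 − t)/((t−1) − ln t) for t ∈ (0,1)∪(1,∞), we have κ(β₂) ≤ D(P‖Q)/D(Q‖P) ≤ κ(1/β₁). -/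
open MeasureTheory Set

/-!
With `f = dP/dQ`, `r t = t log t + 1 - t` (Mathlib's `klFun`) and `r⋆ t = t - 1 - log t`
(`klFunStar`), one has `D(P‖Q) = ∫ r ∘ f dQ` and `D(Q‖P) = ∫ r⋆ ∘ f dQ`. Since
`m = ess inf f ≤ f ≤ ess sup f = M` a.e., integrating against `Q` the pointwise inequality
`r t * r⋆ s ≤ r s * r⋆ t` for `0 < t ≤ s` (i.e. `κ = r / r⋆` is increasing) gives both bounds.

On `(1, ∞)`, `κ` is increasing by the monotone form of L'Hôpital's rule: `r` and `r⋆` vanish at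
`1` and `r' / r⋆' = log t / (1 - t⁻¹)` is increasing, by the same rule once more. The identities
`t * r (1/t) = r⋆ t` and `t * r⋆ (1/t) = r t` give `κ (1/t) = 1 / κ t`, which carries this over
to `(0, 1)`.
-/

open Real InformationTheory
open scoped ENNReal

section MonotoneLHopital

variable {f g f' g' : ℝ → ℝ} {a : ℝ}

theorem exists_mem_Ioo_div_eq_div_deriv {x : ℝ} (hax : a < x)
    (hfc : ContinuousOn f (Icc a x)) (hgc : ContinuousOn g (Icc a x))
    (hf : ∀ y ∈ Ioo a x, HasDerivAt f (f' y) y) (hg : ∀ y ∈ Ioo a x, HasDerivAt g (g' y) y)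
    (hfa : f a = 0) (hga : g a = 0) (hg' : ∀ y ∈ Ioo a x, 0 < g' y) :
    ∃ ξ ∈ Ioo a x, f x / g x = f' ξ / g' ξ := by
  obtain ⟨ζ, hζ, hgζ⟩ := exists_hasDerivAt_eq_slope g g' hax hgc hg
  have hgx : 0 < g x := by
    have := hg' ζ hζ
    rw [hgζ, hga, sub_zero] at this
    exact (div_pos_iff_of_pos_right (sub_pos.2 hax)).1 this
  obtain ⟨ξ, hξ, hcmv⟩ := exists_ratio_hasDerivAt_eq_ratio_slope f f' hax hfc hf g g' hgc hg
  refine ⟨ξ, hξ, ?_⟩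
  rw [hfa, hga, sub_zero, sub_zero] at hcmv
  rw [div_eq_div_iff hgx.ne' (hg' ξ hξ).ne']
  linarith

theorem monotoneOn_div_of_monotoneOn_deriv_div
    (hfc : ContinuousOn f (Ici a)) (hgc : ContinuousOn g (Ici a))
    (hf : ∀ x ∈ Ioi a, HasDerivAt f (f' x) x) (hg : ∀ x ∈ Ioi a, HasDerivAt g (g' x) x)
    (hfa : f a = 0) (hga : g a = 0) (hg' : ∀ x ∈ Ioi a, 0 < g' x)
    (hmono : MonotoneOn (fun x => f' x / g' x) (Ioi a)) :
    MonotoneOn (fun x => f x / g x) (Ioi a) := by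
  have hg_strictMono : StrictMonoOn g (Ici a) :=
    strictMonoOn_of_hasDerivWithinAt_pos (convex_Ici a) hgc
      (fun x hx => (hg x (by rwa [interior_Ici] at hx)).hasDerivWithinAt)
      (fun x hx => hg' x (by rwa [interior_Ici] at hx))
  intro x (hx : a < x) y (hy : a < y) hxy
  rcases hxy.eq_or_lt with rfl | hxy
  · rfl
  have hgx : 0 < g x := hga ▸ hg_strictMono self_mem_Ici hx.le hx
  have hgxy : 0 < g y - g x := sub_pos.2 (hg_strictMono hx.le hy.le hxy)
  obtain ⟨ξ, hξ, hfgx⟩ := exists_mem_Ioo_div_eq_div_deriv hx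
    (hfc.mono Icc_subset_Ici_self) (hgc.mono Icc_subset_Ici_self)
    (fun z hz => hf z hz.1) (fun z hz => hg z hz.1) hfa hga (fun z hz => hg' z hz.1)
  obtain ⟨η, hη, hcmv⟩ := exists_ratio_hasDerivAt_eq_ratio_slope f f' hxy
    (hfc.mono (Icc_subset_Ici_iff hxy.le |>.2 hx.le)) (fun z hz => hf z (hx.trans hz.1))
    g g' (hgc.mono (Icc_subset_Ici_iff hxy.le |>.2 hx.le)) (fun z hz => hg z (hx.trans hz.1))
  have hslope : f x / g x ≤ (f y - f x) / (g y - g x) := by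
    have hη_slope : f' η / g' η = (f y - f x) / (g y - g x) := by
      rw [div_eq_div_iff (hg' η (hx.trans hη.1)).ne' hgxy.ne']
      linarith
    rw [hfgx, ← hη_slope]
    exact hmono hξ.1 (hx.trans hη.1) (hξ.2.trans hη.1).le
  simp only
  rw [div_le_div_iff₀ hgx hgxy] at hslope
  rw [div_le_div_iff₀ hgx (by linarith)]
  nlinarith

end MonotoneLHopital

lemma ENNReal.ae_toReal_mem_Icc_essInf_essSup {α : Type*} {mα : MeasurableSpace α}
    {μ : Measure α} {g : α → ℝ≥0∞} (hg : essSup g μ ≠ ⊤) :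
    ∀ᵐ x ∂μ, (g x).toReal ∈ Icc (essInf g μ).toReal (essSup g μ).toReal := by
  filter_upwards [ae_essInf_le (f := g), ENNReal.ae_le_essSup g] with x hinf hsup
  exact ⟨ENNReal.toReal_mono (ne_top_of_le_ne_top hg hsup) hinf, ENNReal.toReal_mono hg hsup⟩

namespace InformationTheory

noncomputable def klFunStar (x : ℝ) : ℝ := x - 1 - log x

variable {x t s : ℝ}

lemma klFunStar_one : klFunStar 1 = 0 := by simp [klFunStar]

lemma measurable_klFunStar : Measurable klFunStar := by
  unfold klFunStar
  fun_prop

lemma continuousOn_klFunStar : ContinuousOn klFunStar {0}ᶜ :=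
  (continuousOn_id.sub continuousOn_const).sub continuousOn_log

lemma hasDerivAt_klFunStar (hx : x ≠ 0) : HasDerivAt klFunStar (1 - x⁻¹) x :=
  ((hasDerivAt_id x).sub_const 1).sub (hasDerivAt_log hx)

lemma klFunStar_nonneg (hx : 0 < x) : 0 ≤ klFunStar x := by
  have := log_le_sub_one_of_pos hx
  unfold klFunStar
  linarith

lemma klFunStar_pos (hx : 0 < x) (hx1 : x ≠ 1) : 0 < klFunStar x := by
  have := log_lt_sub_one_of_pos hx hx1
  unfold klFunStar
  linarith

lemma mul_klFun_inv (hx : x ≠ 0) : x * klFun x⁻¹ = klFunStar x := by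
  rw [klFun, klFunStar, log_inv]
  field_simp
  ring

lemma mul_klFunStar_inv (hx : x ≠ 0) : x * klFunStar x⁻¹ = klFun x := by
  rw [klFun, klFunStar, log_inv]
  field_simp
  ring

lemma monotoneOn_log_div_one_sub_inv : MonotoneOn (fun x => log x / (1 - x⁻¹)) (Ioi 1) := by
  have hne : ∀ x ∈ Ici (1 : ℝ), x ≠ 0 := fun x hx => (zero_lt_one.trans_le hx).ne'
  have hderiv : ∀ x ∈ Ioi (1 : ℝ), HasDerivAt (fun y => 1 - y⁻¹) (x ^ 2)⁻¹ x := fun x hx => by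
    simpa using (hasDerivAt_inv (hne x (mem_Ici_of_Ioi hx))).const_sub (1 : ℝ)
  refine monotoneOn_div_of_monotoneOn_deriv_div (continuousOn_log.mono hne)
    (continuousOn_const.sub (continuousOn_inv₀.mono hne))
    (fun x hx => hasDerivAt_log (hne x (mem_Ici_of_Ioi hx))) hderiv (by simp) (by simp)
    (fun x hx => by have := hne x (mem_Ici_of_Ioi hx); positivity)
    (monotoneOn_id.congr fun x hx => ?_)
  have := hne x (mem_Ici_of_Ioi hx)
  simp only [id]
  field_simp

lemma klFunStar_le_klFun (hx : 1 ≤ x) : klFunStar x ≤ klFun x := by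
  rcases hx.eq_or_lt with rfl | hx
  · simp [klFun_one, klFunStar_one]
  have hne : ∀ y ∈ Ici (1 : ℝ), y ≠ 0 := fun y hy => (zero_lt_one.trans_le hy).ne'
  obtain ⟨ξ, hξ, hratio⟩ := exists_mem_Ioo_div_eq_div_deriv hx continuous_klFun.continuousOn
    (continuousOn_klFunStar.mono fun y hy => hne y hy.1)
    (fun y hy => hasDerivAt_klFun (hne y (mem_Ici_of_Ioi hy.1)))
    (fun y hy => hasDerivAt_klFunStar (hne y (mem_Ici_of_Ioi hy.1)))
    klFun_one klFunStar_one (fun y hy => sub_pos.2 (inv_lt_one_of_one_lt₀ hy.1))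
  have hξ_pos : 0 < 1 - ξ⁻¹ := sub_pos.2 (inv_lt_one_of_one_lt₀ hξ.1)
  have : 1 ≤ klFun x / klFunStar x := by
    rw [hratio, one_le_div hξ_pos]
    exact one_sub_inv_le_log_of_pos (zero_lt_one.trans hξ.1)
  rwa [one_le_div (klFunStar_pos (zero_lt_one.trans hx) hx.ne')] at this

lemma monotoneOn_klFun_div_klFunStar : MonotoneOn (fun x => klFun x / klFunStar x) (Ioi 1) := by
  have hne : ∀ y ∈ Ici (1 : ℝ), y ≠ 0 := fun y hy => (zero_lt_one.trans_le hy).ne'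
  exact monotoneOn_div_of_monotoneOn_deriv_div continuous_klFun.continuousOn
    (continuousOn_klFunStar.mono hne)
    (fun y hy => hasDerivAt_klFun (hne y (mem_Ici_of_Ioi hy)))
    (fun y hy => hasDerivAt_klFunStar (hne y (mem_Ici_of_Ioi hy)))
    klFun_one klFunStar_one (fun y hy => sub_pos.2 (inv_lt_one_of_one_lt₀ hy))
    monotoneOn_log_div_one_sub_inv

lemma klFun_le_klFunStar (hx0 : 0 < x) (hx1 : x ≤ 1) : klFun x ≤ klFunStar x := by
  rw [← mul_klFunStar_inv hx0.ne', ← mul_klFun_inv hx0.ne']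
  exact mul_le_mul_of_nonneg_left (klFunStar_le_klFun ((one_le_inv₀ hx0).2 hx1)) hx0.le

lemma klFun_mul_klFunStar_le_of_one_le (h1t : 1 ≤ t) (hts : t ≤ s) :
    klFun t * klFunStar s ≤ klFun s * klFunStar t := by
  rcases h1t.eq_or_lt with rfl | h1t
  · simp [klFun_one, klFunStar_one]
  have h1s := h1t.trans_le hts
  have := monotoneOn_klFun_div_klFunStar h1t h1s hts
  rwa [div_le_div_iff₀ (klFunStar_pos (zero_lt_one.trans h1t) h1t.ne')
    (klFunStar_pos (zero_lt_one.trans h1s) h1s.ne')] at this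

theorem klFun_mul_klFunStar_le (ht : 0 < t) (hts : t ≤ s) :
    klFun t * klFunStar s ≤ klFun s * klFunStar t := by
  have hs : 0 < s := ht.trans_le hts
  rcases le_total 1 t with h1t | ht1
  · exact klFun_mul_klFunStar_le_of_one_le h1t hts
  rcases le_total s 1 with hs1 | h1s
  · have hinv := klFun_mul_klFunStar_le_of_one_le ((one_le_inv₀ hs).2 hs1) (inv_anti₀ ht hts)
    calc klFun t * klFunStar s = (t * s) * (klFun s⁻¹ * klFunStar t⁻¹) := by
          rw [← mul_klFunStar_inv ht.ne', ← mul_klFun_inv hs.ne']; ring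
      _ ≤ (t * s) * (klFun t⁻¹ * klFunStar s⁻¹) := by gcongr
      _ = klFun s * klFunStar t := by
          rw [← mul_klFunStar_inv hs.ne', ← mul_klFun_inv ht.ne']; ring
  · calc klFun t * klFunStar s ≤ klFunStar t * klFunStar s :=
          mul_le_mul_of_nonneg_right (klFun_le_klFunStar ht ht1) (klFunStar_nonneg hs)
      _ ≤ klFunStar t * klFun s :=
          mul_le_mul_of_nonneg_left (klFunStar_le_klFun h1s) (klFunStar_nonneg ht)
      _ = klFun s * klFunStar t := mul_comm _ _

section Integral

variable {α : Type*} {mα : MeasurableSpace α} {μ ν : Measure α} {f : α → ℝ} {m M : ℝ}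

lemma _root_.MeasureTheory.Integrable.comp_of_ae_mem_Icc [IsFiniteMeasure μ] {h : ℝ → ℝ}
    (hh : Measurable h) (hhc : ContinuousOn h (Icc m M)) (hf : AEMeasurable f μ)
    (hfm : ∀ᵐ x ∂μ, f x ∈ Icc m M) : Integrable (fun x => h (f x)) μ := by
  obtain ⟨C, hC⟩ := isCompact_Icc.exists_bound_of_continuousOn hhc
  exact Integrable.of_bound (hh.comp_aemeasurable hf).aestronglyMeasurable C
    (hfm.mono fun x hx => hC _ hx)

lemma integral_klFun_mul_klFunStar_le (hr : Integrable (fun x => klFun (f x)) μ)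
    (hr' : Integrable (fun x => klFunStar (f x)) μ) (hpos : ∀ᵐ x ∂μ, 0 < f x)
    (hle : ∀ᵐ x ∂μ, f x ≤ s) :
    (∫ x, klFun (f x) ∂μ) * klFunStar s ≤ klFun s * ∫ x, klFunStar (f x) ∂μ := by
  rw [← integral_mul_const, ← integral_const_mul]
  exact integral_mono_ae (hr.mul_const _) (hr'.const_mul _)
    (by filter_upwards [hpos, hle] with x h0 h1 using klFun_mul_klFunStar_le h0 h1)

lemma klFun_mul_integral_klFunStar_le (hr : Integrable (fun x => klFun (f x)) μ)
    (hr' : Integrable (fun x => klFunStar (f x)) μ) (ht : 0 < t) (hle : ∀ᵐ x ∂μ, t ≤ f x) :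
    klFun t * ∫ x, klFunStar (f x) ∂μ ≤ (∫ x, klFun (f x) ∂μ) * klFunStar t := by
  rw [← integral_mul_const, ← integral_const_mul]
  exact integral_mono_ae (hr'.const_mul _) (hr.mul_const _)
    (by filter_upwards [hle] with x h using klFun_mul_klFunStar_le ht h)

lemma integral_klFunStar_pos (hr' : Integrable (fun x => klFunStar (f x)) μ)
    (hpos : ∀ᵐ x ∂μ, 0 < f x) (hf : ¬ f =ᵐ[μ] 1) : 0 < ∫ x, klFunStar (f x) ∂μ := by
  have hnonneg : 0 ≤ᵐ[μ] fun x => klFunStar (f x) := hpos.mono fun x hx => klFunStar_nonneg hx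
  refine (integral_nonneg_of_ae hnonneg).lt_of_ne fun h => hf ?_
  filter_upwards [(integral_eq_zero_iff_of_nonneg_ae hnonneg hr').1 h.symm, hpos] with x h0 hx
  by_contra h1
  exact (klFunStar_pos hx h1).ne' h0

theorem integral_klFun_div_integral_klFunStar_mem_Icc [IsFiniteMeasure μ] (hf : AEMeasurable f μ)
    (hm : 0 < m) (hm1 : m ≠ 1) (hM1 : M ≠ 1) (hfm : ∀ᵐ x ∂μ, f x ∈ Icc m M)
    (hf1 : ¬ f =ᵐ[μ] 1) :
    (∫ x, klFun (f x) ∂μ) / (∫ x, klFunStar (f x) ∂μ)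
      ∈ Icc (klFun m / klFunStar m) (klFun M / klFunStar M) := by
  have hIcc : Icc m M ⊆ {0}ᶜ := fun y hy => (hm.trans_le hy.1).ne'
  have hpos : ∀ᵐ x ∂μ, 0 < f x := hfm.mono fun x hx => hm.trans_le hx.1
  have hr := Integrable.comp_of_ae_mem_Icc measurable_klFun continuous_klFun.continuousOn hf hfm
  have hr' := Integrable.comp_of_ae_mem_Icc measurable_klFunStar
    (continuousOn_klFunStar.mono hIcc) hf hfm
  have hden := integral_klFunStar_pos hr' hpos hf1
  constructor
  · rw [div_le_div_iff₀ (klFunStar_pos hm hm1) hden]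
    exact klFun_mul_integral_klFunStar_le hr hr' hm (hfm.mono fun x hx => hx.1)
  · have : (ae μ).NeBot := ae_neBot.2 fun hμ => hf1 (by simp [hμ, Filter.EventuallyEq])
    obtain ⟨x, hx⟩ := hfm.exists
    have hM : 0 < M := hm.trans_le (hx.1.trans hx.2)
    rw [div_le_div_iff₀ hden (klFunStar_pos hM hM1)]
    exact integral_klFun_mul_klFunStar_le hr hr' hpos (hfm.mono fun x hx => hx.2)

variable [IsProbabilityMeasure μ] [IsProbabilityMeasure ν]

lemma integral_log_rnDeriv_eq_integral_klFun (hμν : μ ≪ ν)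
    (h_int : Integrable (fun x => klFun (μ.rnDeriv ν x).toReal) ν) :
    ∫ x, log (μ.rnDeriv ν x).toReal ∂μ = ∫ x, klFun (μ.rnDeriv ν x).toReal ∂ν := by
  rw [integral_klFun_rnDeriv hμν ((integrable_klFun_rnDeriv_iff hμν).1 h_int)]
  simp [llr]

lemma integral_log_rnDeriv_eq_integral_klFunStar (hμν : μ ≪ ν) (hνμ : ν ≪ μ)
    (h_int : Integrable (fun x => log (μ.rnDeriv ν x).toReal) ν) :
    ∫ x, log (ν.rnDeriv μ x).toReal ∂ν = ∫ x, klFunStar (μ.rnDeriv ν x).toReal ∂ν := by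
  have hlog : (fun x => log (ν.rnDeriv μ x).toReal) =ᵐ[ν] fun x => -log (μ.rnDeriv ν x).toReal := by
    filter_upwards [hνμ.ae_le (Measure.inv_rnDeriv hμν)] with x hx
    rw [← hx, Pi.inv_apply, ENNReal.toReal_inv, log_inv]
  have h_int_sub : Integrable (fun x => (μ.rnDeriv ν x).toReal - 1) ν :=
    Measure.integrable_toReal_rnDeriv.sub (integrable_const 1)
  simp only [klFunStar]
  rw [integral_congr_ae hlog, integral_neg, integral_sub h_int_sub h_int,
    integral_sub Measure.integrable_toReal_rnDeriv (integrable_const 1),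
    Measure.integral_toReal_rnDeriv hμν]
  simp

end Integral

end InformationTheory

theorem relEntropy_ratio_bounds_general {α : Type*} [MeasurableSpace α] (P Q : Measure α)
    [IsProbabilityMeasure P] [IsProbabilityMeasure Q]
    (hPQ : P ≪ Q) (hQP : Q ≪ P)
    (hM : 1 < essSup (P.rnDeriv Q) Q) (hM' : essSup (P.rnDeriv Q) Q ≠ ⊤)
    (hm0 : 0 < essInf (P.rnDeriv Q) Q) (hm1 : essInf (P.rnDeriv Q) Q < 1)
    (κ : ℝ → ℝ)
    (hκ : ∀ t, κ t = (t * Real.log t + 1 - t) / ((t - 1) - Real.log t)) :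
    κ ((essInf (P.rnDeriv Q) Q).toReal)
        ≤ (∫ x, Real.log ((P.rnDeriv Q x).toReal) ∂P)
            / (∫ x, Real.log ((Q.rnDeriv P x).toReal) ∂Q)
      ∧ (∫ x, Real.log ((P.rnDeriv Q x).toReal) ∂P)
            / (∫ x, Real.log ((Q.rnDeriv P x).toReal) ∂Q)
        ≤ κ ((essSup (P.rnDeriv Q) Q).toReal) := by
  have hκ' : ∀ t, κ t = klFun t / klFunStar t := hκ
  set g := P.rnDeriv Q
  have hm_ne_top : essInf g Q ≠ ⊤ := (hm1.trans ENNReal.one_lt_top).ne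
  have hm_pos : 0 < (essInf g Q).toReal := ENNReal.toReal_pos hm0.ne' hm_ne_top
  have hm_lt : (essInf g Q).toReal < 1 := by
    simpa using (ENNReal.toReal_lt_toReal hm_ne_top ENNReal.one_ne_top).2 hm1
  have hM_gt : 1 < (essSup g Q).toReal := by
    simpa using (ENNReal.toReal_lt_toReal ENNReal.one_ne_top hM').2 hM
  have hbounds := ENNReal.ae_toReal_mem_Icc_essInf_essSup hM'
  have hmeas : AEMeasurable (fun x => (g x).toReal) Q :=
    (Measure.measurable_rnDeriv P Q).ennreal_toReal.aemeasurable
  have hklFun := Integrable.comp_of_ae_mem_Icc measurable_klFun continuous_klFun.continuousOn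
    hmeas hbounds
  have hlog := Integrable.comp_of_ae_mem_Icc measurable_log
    (continuousOn_log.mono fun y hy => (hm_pos.trans_le hy.1).ne') hmeas hbounds
  have hg_ne_one : ¬ (fun x => (g x).toReal) =ᵐ[Q] 1 := fun h => hm1.ne <| by
    rw [essInf_congr_ae (g := fun _ => 1), essInf_const' (1 : ℝ≥0∞)]
    filter_upwards [h] with x hx using (ENNReal.toReal_eq_one_iff _).1 hx
  rw [integral_log_rnDeriv_eq_integral_klFun hPQ hklFun,
    integral_log_rnDeriv_eq_integral_klFunStar hPQ hQP hlog, hκ', hκ']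
  exact integral_klFun_div_integral_klFunStar_mem_Icc hmeas hm_pos hm_lt.ne hM_gt.ne' hbounds
    hg_ne_one

theorem relEntropy_ratio_bounds {α : Type*} [MeasurableSpace α] (P Q : Measure α)
    [IsProbabilityMeasure P] [IsProbabilityMeasure Q]
    (hPQ : P ≪ Q) (hQP : Q ≪ P) (hne : P ≠ Q)
    (hM : 1 < essSup (P.rnDeriv Q) Q) (hM' : essSup (P.rnDeriv Q) Q ≠ ⊤)
    (hm0 : 0 < essInf (P.rnDeriv Q) Q) (hm1 : essInf (P.rnDeriv Q) Q < 1)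
    (κ : ℝ → ℝ)
    (hκ : ∀ t, κ t = (t * Real.log t + 1 - t) / ((t - 1) - Real.log t)) :
    κ ((essInf (P.rnDeriv Q) Q).toReal)
        ≤ (∫ x, Real.log ((P.rnDeriv Q x).toReal) ∂P)
            / (∫ x, Real.log ((Q.rnDeriv P x).toReal) ∂Q)
      ∧ (∫ x, Real.log ((P.rnDeriv Q x).toReal) ∂P)
            / (∫ x, Real.log ((Q.rnDeriv P x).toReal) ∂Q)
        ≤ κ ((essSup (P.rnDeriv Q) Q).toReal) :=
  relEntropy_ratio_bounds_general P Q hPQ hQP hM hM' hm0 hm1 κ hκ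
end

section
/- The function κ(t) = (t·ln t + 1 − t)/((t−1) − ln t), defined for t ∈ (0,1)∪(1,∞), is monotonically increasing, and lim_{t→1} κ(t) = 1. -/
/-!
Write `κ = N / D` with `N t = t log t + 1 - t` and `D t = t - 1 - log t > 0`. Then
`N' D - N D' = ((t - 1)² - t log² t) / t`, which is nonnegative because, with `s = √t`, it reduces
to `|2 log s| ≤ |s - s⁻¹|`; so `κ` is monotone on `(0, 1)` and on `(1, ∞)`. Moreover
`N - D = (t + 1) log t - 2 (t - 1)` and `N - t D = -t (t - t⁻¹ - 2 log t)`; both brackets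
increase on `(0, ∞)` and vanish at `1`, so `t ≤ κ t ≤ 1` on `(0, 1)` and `1 ≤ κ t ≤ t` on `(1, ∞)`.
This bridges the gap at `1` and squeezes `κ` to `1`.
-/

open Set Real Filter Topology

theorem monotoneOn_of_hasDerivAt_nonneg_of_isOpen {D : Set ℝ} (hD : Convex ℝ D) (hDo : IsOpen D)
    {f f' : ℝ → ℝ} (hf : ∀ x ∈ D, HasDerivAt f (f' x) x) (hf' : ∀ x ∈ D, 0 ≤ f' x) :
    MonotoneOn f D :=
  monotoneOn_of_hasDerivWithinAt_nonneg hD (fun x hx ↦ (hf x hx).continuousAt.continuousWithinAt)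
    (by rw [hDo.interior_eq]; exact fun x hx ↦ (hf x hx).hasDerivWithinAt)
    (by rwa [hDo.interior_eq])

theorem monotoneOn_sub_inv_sub_two_mul_log :
    MonotoneOn (fun s : ℝ ↦ s - s⁻¹ - 2 * log s) (Ioi 0) := by
  refine monotoneOn_of_hasDerivAt_nonneg_of_isOpen (convex_Ioi 0) isOpen_Ioi
    (f' := fun s ↦ (1 - s⁻¹) ^ 2) (fun s hs ↦ ?_) (fun s _ ↦ sq_nonneg _)
  have hs0 : s ≠ 0 := (mem_Ioi.mp hs).ne'
  refine (((hasDerivAt_id' s).sub (hasDerivAt_inv hs0)).sub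
    ((hasDerivAt_log hs0).const_mul 2)).congr_deriv ?_
  field_simp
  ring

theorem monotoneOn_add_one_mul_log_sub :
    MonotoneOn (fun t : ℝ ↦ (t + 1) * log t - 2 * (t - 1)) (Ioi 0) := by
  refine monotoneOn_of_hasDerivAt_nonneg_of_isOpen (convex_Ioi 0) isOpen_Ioi
    (f' := fun t ↦ log t - (1 - t⁻¹)) (fun t ht ↦ ?_)
    (fun t ht ↦ sub_nonneg.mpr (one_sub_inv_le_log_of_pos ht))
  have ht0 : t ≠ 0 := (mem_Ioi.mp ht).ne'
  refine ((((hasDerivAt_id' t).add_const 1).mul (hasDerivAt_log ht0)).sub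
    (((hasDerivAt_id' t).sub_const 1).const_mul 2)).congr_deriv ?_
  field_simp
  ring

theorem two_mul_log_le_sub_inv {s : ℝ} (hs : 1 ≤ s) : 2 * log s ≤ s - s⁻¹ := by
  have := monotoneOn_sub_inv_sub_two_mul_log (mem_Ioi.mpr one_pos)
    (mem_Ioi.mpr (one_pos.trans_le hs)) hs
  simp only [inv_one, log_one] at this
  linarith

theorem sub_inv_le_two_mul_log {s : ℝ} (hs0 : 0 < s) (hs : s ≤ 1) : s - s⁻¹ ≤ 2 * log s := by
  have := monotoneOn_sub_inv_sub_two_mul_log (mem_Ioi.mpr hs0) (mem_Ioi.mpr one_pos) hs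
  simp only [inv_one, log_one] at this
  linarith

theorem two_mul_sub_one_le_add_one_mul_log {t : ℝ} (ht : 1 ≤ t) :
    2 * (t - 1) ≤ (t + 1) * log t := by
  have := monotoneOn_add_one_mul_log_sub (mem_Ioi.mpr one_pos)
    (mem_Ioi.mpr (one_pos.trans_le ht)) ht
  simp only [log_one] at this
  linarith

theorem add_one_mul_log_le_two_mul_sub_one {t : ℝ} (ht0 : 0 < t) (ht : t ≤ 1) :
    (t + 1) * log t ≤ 2 * (t - 1) := by
  have := monotoneOn_add_one_mul_log_sub (mem_Ioi.mpr ht0) (mem_Ioi.mpr one_pos) ht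
  simp only [log_one] at this
  linarith

theorem mul_log_sq_le_sub_one_sq {t : ℝ} (ht : 0 < t) : t * log t ^ 2 ≤ (t - 1) ^ 2 := by
  set s := √t with hs
  have hs0 : 0 < s := sqrt_pos.mpr ht
  have hst : s ^ 2 = t := sq_sqrt ht.le
  have hlog : log t = 2 * log s := by rw [hs, log_sqrt ht.le]; ring
  have key : (2 * log s) ^ 2 ≤ (s - s⁻¹) ^ 2 := by
    rcases le_total 1 s with h | h
    · exact sq_le_sq' (by linarith [log_nonneg h, inv_le_one_of_one_le₀ h])
        (two_mul_log_le_sub_inv h)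
    · rw [← neg_sq (s - s⁻¹)]
      exact sq_le_sq' (by linarith [sub_inv_le_two_mul_log hs0 h])
        (by linarith [log_nonpos hs0.le h, one_le_inv₀ hs0 |>.mpr h])
  calc t * log t ^ 2 = s ^ 2 * (2 * log s) ^ 2 := by rw [hlog, hst]
    _ ≤ s ^ 2 * (s - s⁻¹) ^ 2 := by gcongr
    _ = (t - 1) ^ 2 := by rw [← hst]; field_simp

noncomputable def kappa (t : ℝ) : ℝ := (t * log t + 1 - t) / (t - 1 - log t)

theorem sub_one_sub_log_pos {t : ℝ} (ht : 0 < t) (ht1 : t ≠ 1) : 0 < t - 1 - log t :=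
  sub_pos.mpr (log_lt_sub_one_of_pos ht ht1)

theorem hasDerivAt_kappa {t : ℝ} (ht : 0 < t) (ht1 : t ≠ 1) :
    HasDerivAt kappa (((t - 1) ^ 2 - t * log t ^ 2) / (t * (t - 1 - log t) ^ 2)) t := by
  have hden := (sub_one_sub_log_pos ht ht1).ne'
  have hnum : HasDerivAt (fun t ↦ t * log t + 1 - t) (log t) t :=
    ((((hasDerivAt_id' t).mul (hasDerivAt_log ht.ne')).add_const 1).sub
      (hasDerivAt_id' t)).congr_deriv (by field_simp; ring)
  have hdenom : HasDerivAt (fun t ↦ t - 1 - log t) (1 - t⁻¹) t :=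
    ((hasDerivAt_id' t).sub_const 1).sub (hasDerivAt_log ht.ne')
  refine (hnum.div hdenom hden).congr_deriv ?_
  field_simp
  ring

theorem monotoneOn_kappa_of_subset {D : Set ℝ} (hD : Convex ℝ D) (hDo : IsOpen D)
    (hsub : D ⊆ Ioi 0 \ {1}) : MonotoneOn kappa D :=
  monotoneOn_of_hasDerivAt_nonneg_of_isOpen hD hDo
    (fun _ ht ↦ hasDerivAt_kappa (hsub ht).1 (hsub ht).2)
    (fun _ ht ↦ div_nonneg (sub_nonneg.mpr (mul_log_sq_le_sub_one_sq (hsub ht).1))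
      (mul_nonneg (le_of_lt (hsub ht).1) (sq_nonneg _)))

theorem kappa_le_one {t : ℝ} (ht0 : 0 < t) (ht : t < 1) : kappa t ≤ 1 := by
  rw [kappa, div_le_one (sub_one_sub_log_pos ht0 ht.ne)]
  linarith [add_one_mul_log_le_two_mul_sub_one ht0 ht.le]

theorem one_le_kappa {t : ℝ} (ht : 1 < t) : 1 ≤ kappa t := by
  rw [kappa, one_le_div (sub_one_sub_log_pos (one_pos.trans ht) ht.ne')]
  linarith [two_mul_sub_one_le_add_one_mul_log ht.le]

theorem self_le_kappa {t : ℝ} (ht0 : 0 < t) (ht : t < 1) : t ≤ kappa t := by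
  rw [kappa, le_div_iff₀ (sub_one_sub_log_pos ht0 ht.ne)]
  have h := mul_le_mul_of_nonneg_left (sub_inv_le_two_mul_log ht0 ht.le) ht0.le
  rw [mul_sub, mul_inv_cancel₀ ht0.ne'] at h
  linarith

theorem kappa_le_self {t : ℝ} (ht : 1 < t) : kappa t ≤ t := by
  have ht0 : 0 < t := one_pos.trans ht
  rw [kappa, div_le_iff₀ (sub_one_sub_log_pos ht0 ht.ne')]
  have h := mul_le_mul_of_nonneg_left (two_mul_log_le_sub_inv ht.le) ht0.le
  rw [mul_sub, mul_inv_cancel₀ ht0.ne'] at h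
  linarith

theorem monotoneOn_kappa : MonotoneOn kappa (Ioo 0 1 ∪ Ioi 1) := by
  have hlow := monotoneOn_kappa_of_subset (convex_Ioo 0 1) isOpen_Ioo
    fun _ ht ↦ ⟨ht.1, ht.2.ne⟩
  have hhigh := monotoneOn_kappa_of_subset (convex_Ioi 1) isOpen_Ioi
    fun _ (ht : 1 < _) ↦ ⟨one_pos.trans ht, ht.ne'⟩
  rintro a (ha | ha) b (hb | hb) hab
  · exact hlow ha hb hab
  · exact (kappa_le_one ha.1 ha.2).trans (one_le_kappa hb)
  · exact absurd (hab.trans_lt hb.2) (not_lt.mpr (mem_Ioi.mp ha).le)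
  · exact hhigh ha hb hab

theorem abs_kappa_sub_one_le {t : ℝ} (ht0 : 0 < t) (ht1 : t ≠ 1) :
    |kappa t - 1| ≤ |t - 1| := by
  rcases ht1.lt_or_gt with ht | ht
  · rw [abs_of_nonpos (by linarith [kappa_le_one ht0 ht]), abs_of_neg (by linarith)]
    linarith [self_le_kappa ht0 ht]
  · rw [abs_of_nonneg (by linarith [one_le_kappa ht]), abs_of_pos (by linarith)]
    linarith [kappa_le_self ht]

theorem tendsto_kappa : Tendsto kappa (𝓝[Ioi 0 \ {1}] 1) (𝓝 1) := by
  have hid : Tendsto (fun t : ℝ ↦ |t - 1|) (𝓝 1) (𝓝 0) := by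
    simpa using (continuous_sub_right (1 : ℝ)).abs.tendsto 1
  rw [tendsto_iff_norm_sub_tendsto_zero]
  refine squeeze_zero' (Eventually.of_forall fun _ ↦ norm_nonneg _) ?_
    (hid.mono_left nhdsWithin_le_nhds)
  filter_upwards [self_mem_nhdsWithin] with t ht
  exact abs_kappa_sub_one_le ht.1 ht.2

theorem kappa_monotone_and_tendsto (κ : ℝ → ℝ)
    (hκ : ∀ t, κ t = (t * Real.log t + 1 - t) / ((t - 1) - Real.log t)) :
    MonotoneOn κ (Ioo (0:ℝ) 1 ∪ Ioi 1)
      ∧ Filter.Tendsto κ (nhdsWithin 1 (Ioi (0:ℝ) \ {1})) (nhds 1) := by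
  obtain rfl : κ = kappa := funext hκ
  exact ⟨monotoneOn_kappa, tendsto_kappa⟩
end

section
/- Let P and Q be probability measures on a finite set A with Q(a) > 0 for all a ∈ A, and let Q_min = min_{a∈A} Q(a). Then D(P‖Q) ≤ ln(1 + |P−Q|²/(2·Q_min)) in nats, where |P−Q| = Σ_a |P(a)−Q(a)|. -/
open Finset

theorem reverse_Pinsker_finite {α : Type*} [Fintype α] [Nonempty α] (P Q : α → ℝ)
    (hP0 : ∀ a, 0 ≤ P a) (hP1 : ∑ a, P a = 1)
    (hQ0 : ∀ a, 0 < Q a) (hQ1 : ∑ a, Q a = 1) :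
    ∑ a, P a * Real.log (P a / Q a)
      ≤ Real.log (1 + (∑ a, |P a - Q a|) ^ 2 / (2 * ⨅ a, Q a)) := by
  classical
  set V := ∑ a, |P a - Q a| with hV
  -- the infimum is attained
  obtain ⟨a0, ha0⟩ := Finite.exists_min Q
  have hminf : (⨅ a, Q a) = Q a0 :=
    le_antisymm (ciInf_le (Finite.bddBelow_range Q) a0) (le_ciInf ha0)
  have hm : 0 < ⨅ a, Q a := hminf ▸ hQ0 a0
  have hmle : ∀ a, (⨅ a, Q a) ≤ Q a := fun a => hminf ▸ ha0 a
  -- each deviation is at most V/2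
  have hsum0 : ∑ a, (P a - Q a) = 0 := by
    rw [Finset.sum_sub_distrib, hP1, hQ1]; ring
  have hdev : ∀ a, |P a - Q a| ≤ V / 2 := by
    intro a
    have h1 : P a - Q a + ∑ b ∈ univ.erase a, (P b - Q b) = 0 := by
      rw [Finset.add_sum_erase univ (fun b => P b - Q b) (mem_univ a)]; exact hsum0
    have h2 : |P a - Q a| = |∑ b ∈ univ.erase a, (P b - Q b)| := by
      rw [show ∑ b ∈ univ.erase a, (P b - Q b) = -(P a - Q a) by linarith]
      rw [abs_neg]
    have h3 : |∑ b ∈ univ.erase a, (P b - Q b)| ≤ ∑ b ∈ univ.erase a, |P b - Q b| :=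
      Finset.abs_sum_le_sum_abs _ _
    have h4 : |P a - Q a| + ∑ b ∈ univ.erase a, |P b - Q b| = V := by
      rw [hV, ← Finset.add_sum_erase univ (fun b => |P b - Q b|) (mem_univ a)]
    linarith [h2 ▸ h3]
  -- chi-squared bound
  have hchi : ∑ a, (P a - Q a) ^ 2 / Q a ≤ V ^ 2 / (2 * ⨅ a, Q a) := by
    have step1 : ∑ a, (P a - Q a) ^ 2 / Q a ≤ (∑ a, (P a - Q a) ^ 2) / (⨅ a, Q a) := by
      rw [Finset.sum_div]
      apply Finset.sum_le_sum
      intro a _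
      exact div_le_div_of_nonneg_left (sq_nonneg _) hm (hmle a)
    have step2 : ∑ a, (P a - Q a) ^ 2 ≤ V ^ 2 / 2 := by
      have : ∑ a, (P a - Q a) ^ 2 ≤ ∑ a, (V / 2) * |P a - Q a| := by
        apply Finset.sum_le_sum
        intro a _
        calc (P a - Q a) ^ 2 = |P a - Q a| * |P a - Q a| := by
              rw [abs_mul_abs_self]; ring
          _ ≤ (V / 2) * |P a - Q a| :=
              mul_le_mul_of_nonneg_right (hdev a) (abs_nonneg _)
      rw [← Finset.mul_sum, ← hV] at this
      linarith
    calc ∑ a, (P a - Q a) ^ 2 / Q a ≤ (∑ a, (P a - Q a) ^ 2) / (⨅ a, Q a) := step1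
      _ ≤ (V ^ 2 / 2) / (⨅ a, Q a) := by gcongr
      _ = V ^ 2 / (2 * ⨅ a, Q a) := by rw [div_div]
  -- Jensen's inequality
  set S := univ.filter (fun a => P a ≠ 0) with hS
  have hw1 : ∑ a ∈ S, P a = 1 := by
    rw [hS, Finset.sum_filter_ne_zero, hP1]
  have hJ : ∑ a ∈ S, P a * Real.log (P a / Q a)
      ≤ Real.log (∑ a ∈ S, P a * (P a / Q a)) := by
    have := (strictConcaveOn_log_Ioi.concaveOn).le_map_sum
      (t := S) (w := P) (p := fun a => P a / Q a)
      (fun i _ => hP0 i) hw1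
      (fun i hi => by
        simp only [hS, mem_filter] at hi
        exact Set.mem_Ioi.mpr (div_pos (lt_of_le_of_ne (hP0 i) (Ne.symm hi.2)) (hQ0 i)))
    simpa [smul_eq_mul] using this
  have hLHS : ∑ a, P a * Real.log (P a / Q a) = ∑ a ∈ S, P a * Real.log (P a / Q a) := by
    rw [hS]
    exact (Finset.sum_filter_of_ne (fun a _ h => by
      intro hpa; apply h; rw [hpa]; ring)).symm
  have hmid : ∑ a ∈ S, P a * (P a / Q a) = 1 + ∑ a, (P a - Q a) ^ 2 / Q a := by
    have hall : ∑ a ∈ S, P a * (P a / Q a) = ∑ a, P a * (P a / Q a) :=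
      Finset.sum_filter_of_ne (fun a _ h => by
        intro hpa; apply h; rw [hpa]; ring)
    have hterm : ∀ a, P a * (P a / Q a) = (P a - Q a) ^ 2 / Q a + (2 * P a - Q a) := by
      intro a
      have hq : Q a ≠ 0 := (hQ0 a).ne'
      field_simp
      ring
    rw [hall]
    calc ∑ a, P a * (P a / Q a) = ∑ a, ((P a - Q a) ^ 2 / Q a + (2 * P a - Q a)) := by
          apply Finset.sum_congr rfl; intro a _; exact hterm a
      _ = ∑ a, (P a - Q a) ^ 2 / Q a + (2 * ∑ a, P a - ∑ a, Q a) := by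
          rw [Finset.sum_add_distrib, Finset.sum_sub_distrib, ← Finset.mul_sum]
      _ = 1 + ∑ a, (P a - Q a) ^ 2 / Q a := by rw [hP1, hQ1]; ring
  have hchi0 : 0 ≤ ∑ a, (P a - Q a) ^ 2 / Q a :=
    Finset.sum_nonneg fun a _ => div_nonneg (sq_nonneg _) (hQ0 a).le
  calc ∑ a, P a * Real.log (P a / Q a)
      = ∑ a ∈ S, P a * Real.log (P a / Q a) := hLHS
    _ ≤ Real.log (∑ a ∈ S, P a * (P a / Q a)) := hJ
    _ = Real.log (1 + ∑ a, (P a - Q a) ^ 2 / Q a) := by rw [hmid]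
    _ ≤ Real.log (1 + V ^ 2 / (2 * ⨅ a, Q a)) :=
        Real.log_le_log (by linarith) (by linarith)
end

section
/- Let P, Q be probability measures on a finite set A with Q strictly positive, and let Q_min = min_a Q(a). Then the Csiszár–Talata inequality D(P‖Q) ≤ (1/Q_min)·|P−Q|² holds in nats. -/
theorem csiszar_talata {α : Type*} [Fintype α] [Nonempty α] (P Q : α → ℝ)
    (hP0 : ∀ a, 0 ≤ P a) (hP1 : ∑ a, P a = 1)
    (hQ0 : ∀ a, 0 < Q a) (hQ1 : ∑ a, Q a = 1) :
    ∑ a, P a * Real.log (P a / Q a)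
      ≤ (∑ a, |P a - Q a|) ^ 2 / (⨅ a, Q a) := by
  obtain ⟨a₀, ha₀⟩ := Finite.exists_min Q
  have hm : (⨅ a, Q a) = Q a₀ :=
    le_antisymm (ciInf_le (Finite.bddBelow_range Q) a₀) (le_ciInf ha₀)
  rw [hm]
  have hmpos := hQ0 a₀
  -- Step 1: D ≤ χ²
  have h1 : ∑ a, P a * Real.log (P a / Q a)
      ≤ ∑ a, ((P a - Q a) ^ 2 / Q a + (P a - Q a)) := by
    apply Finset.sum_le_sum
    intro a _
    rcases eq_or_lt_of_le (hP0 a) with h | h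
    · rw [← h]
      have hq := hQ0 a
      field_simp
      simp
    · have hlog : Real.log (P a / Q a) ≤ P a / Q a - 1 :=
        Real.log_le_sub_one_of_pos (div_pos h (hQ0 a))
      have hq := hQ0 a
      have := mul_le_mul_of_nonneg_left hlog (le_of_lt h)
      have heq : P a * (P a / Q a - 1) = (P a - Q a) ^ 2 / Q a + (P a - Q a) := by
        field_simp; ring
      linarith [heq ▸ this]
  have h2 : ∑ a, ((P a - Q a) ^ 2 / Q a + (P a - Q a))
      = ∑ a, (P a - Q a) ^ 2 / Q a := by
    rw [Finset.sum_add_distrib, Finset.sum_sub_distrib, hP1, hQ1]; ring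
  have h3 : ∑ a, (P a - Q a) ^ 2 / Q a ≤ ∑ a, |P a - Q a| ^ 2 / Q a₀ := by
    apply Finset.sum_le_sum
    intro a _
    rw [sq_abs]
    exact div_le_div_of_nonneg_left (sq_nonneg _) hmpos (ha₀ a)
  have h4 : ∑ a, |P a - Q a| ^ 2 ≤ (∑ a, |P a - Q a|) ^ 2 :=
    Finset.sum_sq_le_sq_sum_of_nonneg (fun i _ => abs_nonneg _)
  rw [← Finset.sum_div] at h3
  have h5 : (∑ a, |P a - Q a| ^ 2) / Q a₀ ≤ (∑ a, |P a - Q a|) ^ 2 / Q a₀ :=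
    div_le_div_of_nonneg_right h4 hmpos.le
  linarith
end
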